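/- arXiv:2508.07034 — 4 statements merged into one kernel-verified Lean document; each statement's English description precedes it below -/
import Mathlib

section
/- For every odd integer ℓ ≥ 5, if G is a graph that is a blow-up of a cycle of length ℓ (i.e., V(G) is partitioned into nonempty cliques W₁,…,W_ℓ such that edges exist only between consecutive parts Wᵢ, Wᵢ₊₁ (indices mod ℓ), and each bipartite graph G[Wᵢ₋₁, Wᵢ] obeys orderings of the cliques), then the chromatic number of G satisfies χ(G) ≤ ⌈(ℓ/(ℓ−1))·ω(G)⌉, where ω(G) is the clique number. -/
open SimpleGraph Finset

/-- `G` is a blow-up of a cycle of length `ℓ`: the vertex set is partitioned into `ℓ`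
nonempty ordered cliques `W i` (`i : ZMod ℓ`), edges occur only between consecutive
cliques (indices mod `ℓ`), and the bipartite graph between consecutive cliques obeys the
orderings (recorded by `pos`): each vertex is adjacent to an initial segment of the
neighbouring clique. -/
def IsCycleBlowup {V : Type} (G : SimpleGraph V) (ℓ : ℕ) : Prop :=
  ∃ (W : ZMod ℓ → Finset V) (pos : V → ℕ),
    (∀ v : V, ∃! i, v ∈ W i) ∧
    (∀ i, (W i).Nonempty) ∧
    (∀ i, G.IsClique (W i)) ∧
    (∀ i j, ∀ u ∈ W i, ∀ v ∈ W j, G.Adj u v → i = j ∨ j = i + 1 ∨ j = i - 1) ∧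
    (∀ i, ∀ u ∈ W i, ∀ u' ∈ W i, u ≠ u' → pos u ≠ pos u') ∧
    (∀ i, ∀ u ∈ W i, ∀ u' ∈ W i, ∀ v ∈ W (i + 1), pos u' ≤ pos u → G.Adj u v → G.Adj u' v) ∧
    (∀ i, ∀ v ∈ W (i + 1), ∀ v' ∈ W (i + 1), ∀ u ∈ W i, pos v' ≤ pos v → G.Adj u v → G.Adj u v')

/-!
Order every part by `pos` and give each vertex its rank in its part. An edge between the
vertices of ranks `a` and `b` of two consecutive parts forces a clique of size `a + b + 2`, so
`G` maps homomorphically into the graph on `ZMod ℓ × Fin ω` (`ω` the clique number) in which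
rank `a` of part `i` sees rank `b` of part `i + 1` exactly when `a + b ≤ ω - 2`.

That graph is coloured in `K = ⌈ℓω/(ℓ-1)⌉` rounds, one colour per round. In round `r`, part `i`
looks at its phase `(i - r) mod ℓ`: it stays idle at phase `ℓ - 1`, gives the colour to its
lowest uncoloured rank at odd phases, and to its highest uncoloured rank at the other even
phases. Part `i + 1` is always one phase ahead of part `i`, so whenever one of them colours from
the bottom the other colours from the top or is idle, and the ranks coloured in the same round
add up to at least `ω - 1`. Each part is idle once every `ℓ` rounds, and `(ℓ - 1)K ≥ ℓω` leaves
it enough rounds to colour all its `ω` ranks.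
-/

theorem ZMod.val_add_one_eq_ite {n : ℕ} [NeZero n] (x : ZMod n) :
    (x + 1).val = if x.val = n - 1 then 0 else x.val + 1 := by
  obtain ⟨m, rfl⟩ : ∃ m, n = m + 1 := Nat.exists_eq_succ_of_ne_zero (NeZero.ne n)
  have h (y : Fin (m + 1)) : (y + 1).val = if y.val = m + 1 - 1 then 0 else y.val + 1 := by
    simp [Fin.val_add_one, Fin.ext_iff]
  exact h x

theorem Nat.mul_count_modEq_lt (b : ℕ) {r : ℕ} (hr : 0 < r) (v : ℕ) :
    r * count (· ≡ v [MOD r]) b < b + r := by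
  have hb := Nat.div_add_mod b r
  rw [count_modEq_card b hr v]
  split_ifs <;> rw [Nat.mul_add] <;> omega

theorem Nat.nth_mem_of_lt_count {p : ℕ → Prop} [DecidablePred p] {k n : ℕ}
    (h : k < count p n) : p (nth p k) :=
  nth_mem k fun hf => h.trans_le (count_le_card hf n)

theorem Nat.count_nth_of_lt_count {p : ℕ → Prop} [DecidablePred p] {k n : ℕ}
    (h : k < count p n) : count p (nth p k) = k :=
  count_nth fun hf => h.trans_le (count_le_card hf n)

namespace CycleSchedule

variable {ℓ : ℕ}

def phase (i : ZMod ℓ) (r : ℕ) : ℕ := (i - r).val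

def IsBotRound (i : ZMod ℓ) (r : ℕ) : Prop := phase i r % 2 = 1

def IsTopRound (i : ZMod ℓ) (r : ℕ) : Prop := phase i r % 2 = 0 ∧ phase i r ≠ ℓ - 1

instance (i : ZMod ℓ) : DecidablePred (IsBotRound i) :=
  fun r => inferInstanceAs (Decidable (phase i r % 2 = 1))

instance (i : ZMod ℓ) : DecidablePred (IsTopRound i) :=
  fun r => inferInstanceAs (Decidable (phase i r % 2 = 0 ∧ phase i r ≠ ℓ - 1))

def Scheduled (ω : ℕ) (i : ZMod ℓ) (a r : ℕ) : Prop :=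
  (IsBotRound i r ∧ Nat.count (IsBotRound i) r = a) ∨
    (IsTopRound i r ∧ Nat.count (IsTopRound i) r = ω - 1 - a)

theorem Scheduled.unique {ω : ℕ} {i : ZMod ℓ} {a b r : ℕ} (ha : a < ω) (hb : b < ω)
    (h₁ : Scheduled ω i a r) (h₂ : Scheduled ω i b r) : a = b := by
  unfold Scheduled IsBotRound IsTopRound at h₁ h₂
  omega

noncomputable def roundOf (ω K : ℕ) (i : ZMod ℓ) (a : ℕ) : ℕ :=
  if a < Nat.count (IsBotRound i) K then Nat.nth (IsBotRound i) a
  else Nat.nth (IsTopRound i) (ω - 1 - a)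

variable [NeZero ℓ]

theorem phase_lt (i : ZMod ℓ) (r : ℕ) : phase i r < ℓ := ZMod.val_lt _

theorem phase_add_one (i : ZMod ℓ) (r : ℕ) :
    phase (i + 1) r = if phase i r = ℓ - 1 then 0 else phase i r + 1 := by
  rw [phase, phase, ← ZMod.val_add_one_eq_ite, add_sub_right_comm]

theorem phase_eq_ite_phase_succ (i : ZMod ℓ) (r : ℕ) :
    phase i r = if phase i (r + 1) = ℓ - 1 then 0 else phase i (r + 1) + 1 := by
  rw [phase, phase, ← ZMod.val_add_one_eq_ite, Nat.cast_succ, sub_add_eq_sub_sub, sub_add_cancel]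

theorem phase_eq_sub_one_iff (i : ZMod ℓ) (r : ℕ) :
    phase i r = ℓ - 1 ↔ r ≡ (i + 1).val [MOD ℓ] :=
  calc phase i r = ℓ - 1 ↔ (i - r + 1).val = 0 := by
        rw [ZMod.val_add_one_eq_ite, ← phase]
        split_ifs with h <;> simp [h]
    _ ↔ i + 1 = r := by rw [ZMod.val_eq_zero, sub_add_eq_add_sub, sub_eq_zero]
    _ ↔ r ≡ (i + 1).val [MOD ℓ] := by
        rw [eq_comm, ← ZMod.natCast_eq_natCast_iff, ZMod.natCast_zmod_val]

theorem isBotRound_add_one_iff (i : ZMod ℓ) (r : ℕ) :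
    IsBotRound (i + 1) r ↔ IsTopRound i r := by
  have := phase_lt i r
  unfold IsBotRound IsTopRound
  rw [phase_add_one]
  grind

theorem isTopRound_add_one_iff (hℓ : 1 < ℓ) (i : ZMod ℓ) (r : ℕ) :
    IsTopRound (i + 1) r ↔ phase i r = ℓ - 1 ∨ (IsBotRound i r ∧ phase i r ≠ ℓ - 2) := by
  have := phase_lt i r
  unfold IsBotRound IsTopRound
  rw [phase_add_one]
  grind

theorem count_isBotRound_add_one (i : ZMod ℓ) :
    Nat.count (IsBotRound (i + 1)) = Nat.count (IsTopRound i) := by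
  ext r
  simp only [Nat.count_eq_card_filter_range, isBotRound_add_one_iff]

theorem count_isTopRound_add_one_le (hodd : Odd ℓ) (hℓ : 1 < ℓ) (i : ZMod ℓ) (r : ℕ) :
    Nat.count (IsTopRound (i + 1)) r ≤
      Nat.count (IsBotRound i) r + if phase i r = ℓ - 2 then 1 else 0 := by
  obtain ⟨m, rfl⟩ := hodd
  -- the idle phase `ℓ - 1` of part `i`, a top phase of part `i + 1`, is always followed by the
  -- bottom phase `ℓ - 2` of part `i`, which is not a top phase of part `i + 1`
  induction r with
  | zero => simp
  | succ r ih =>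
    have := phase_eq_ite_phase_succ i r
    have := phase_lt i r
    rw [Nat.count_succ, Nat.count_succ]
    simp only [isTopRound_add_one_iff hℓ, IsBotRound] at ih ⊢
    grind

theorem count_isBotRound_add_count_isTopRound_add_count_idle (hodd : Odd ℓ) (i : ZMod ℓ) (r : ℕ) :
    Nat.count (IsBotRound i) r + Nat.count (IsTopRound i) r +
      Nat.count (fun s => phase i s = ℓ - 1) r = r := by
  obtain ⟨m, rfl⟩ := hodd
  induction r with
  | zero => simp
  | succ r ih =>
    simp only [Nat.count_succ, IsBotRound, IsTopRound]
    grind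

theorem le_count_isBotRound_add_count_isTopRound {ω K : ℕ} (hodd : Odd ℓ)
    (hK : ℓ * ω ≤ (ℓ - 1) * K) (i : ZMod ℓ) :
    ω ≤ Nat.count (IsBotRound i) K + Nat.count (IsTopRound i) K := by
  have hsum := count_isBotRound_add_count_isTopRound_add_count_idle hodd i K
  have hidle := Nat.mul_count_modEq_lt K (Nat.pos_of_neZero ℓ) (i + 1).val
  simp only [← phase_eq_sub_one_iff] at hidle
  obtain ⟨m, rfl⟩ : ∃ m, ℓ = m + 1 := Nat.exists_eq_succ_of_ne_zero (NeZero.ne ℓ)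
  rw [Nat.add_sub_cancel] at hK
  nlinarith

theorem Scheduled.le_add_add_one (hodd : Odd ℓ) (hℓ : 1 < ℓ) {ω : ℕ} {i : ZMod ℓ} {a b r : ℕ}
    (ha : a < ω) (h₁ : Scheduled ω i a r) (h₂ : Scheduled ω (i + 1) b r) : ω ≤ a + b + 1 := by
  have hbot := isBotRound_add_one_iff i r
  have htop := isTopRound_add_one_iff hℓ i r
  rw [Scheduled, count_isBotRound_add_one] at h₂
  unfold IsBotRound IsTopRound at hbot htop
  rcases h₁ with ⟨hi, rfl⟩ | ⟨hi, hai⟩ <;> rcases h₂ with ⟨hj, hbj⟩ | ⟨hj, hbj⟩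
  · unfold IsBotRound at hi hj; omega
  · have := count_isTopRound_add_one_le hodd hℓ i r
    unfold IsBotRound at hi; unfold IsTopRound at hj; split_ifs at this <;> omega
  · omega
  · unfold IsTopRound at hi hj; omega

theorem roundOf_lt_and_scheduled (hodd : Odd ℓ) {ω K : ℕ} (hK : ℓ * ω ≤ (ℓ - 1) * K)
    (i : ZMod ℓ) {a : ℕ} (ha : a < ω) :
    roundOf ω K i a < K ∧ Scheduled ω i a (roundOf ω K i a) := by
  unfold roundOf
  split_ifs with h
  · exact ⟨Nat.nth_lt_of_lt_count h,
      Or.inl ⟨Nat.nth_mem_of_lt_count h, Nat.count_nth_of_lt_count h⟩⟩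
  · have h' : ω - 1 - a < Nat.count (IsTopRound i) K := by
      have := le_count_isBotRound_add_count_isTopRound hodd hK i
      omega
    exact ⟨Nat.nth_lt_of_lt_count h',
      Or.inr ⟨Nat.nth_mem_of_lt_count h', Nat.count_nth_of_lt_count h'⟩⟩

end CycleSchedule

open CycleSchedule

def thresholdCycleBlowup (ℓ ω : ℕ) : SimpleGraph (ZMod ℓ × Fin ω) :=
  SimpleGraph.fromRel fun x y => x.1 = y.1 ∨ (y.1 = x.1 + 1 ∧ (x.2 : ℕ) + y.2 + 1 < ω)

theorem thresholdCycleBlowup_colorable {ℓ ω K : ℕ} (hodd : Odd ℓ) (hℓ : 1 < ℓ)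
    (hK : ℓ * ω ≤ (ℓ - 1) * K) : (thresholdCycleBlowup ℓ ω).Colorable K := by
  have : NeZero ℓ := ⟨by omega⟩
  have hspec (x : ZMod ℓ × Fin ω) := roundOf_lt_and_scheduled hodd hK x.1 x.2.isLt
  refine ⟨Coloring.mk (fun x => ⟨roundOf ω K x.1 x.2, (hspec x).1⟩) ?_⟩
  rintro ⟨i, a⟩ ⟨j, b⟩ hadj heq
  have hround : roundOf ω K i a = roundOf ω K j b := congrArg Fin.val heq
  have hi := (hspec (i, a)).2
  have hj := (hspec (j, b)).2
  simp only at hi hj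
  rw [hround] at hi
  obtain ⟨hne, (rfl | ⟨rfl, hab⟩) | (heq | ⟨rfl, hab⟩)⟩ := (fromRel_adj _ _ _).1 hadj
  · exact hne (Prod.ext rfl (Fin.ext (hi.unique a.isLt b.isLt hj)))
  · have := hi.le_add_add_one hodd hℓ a.isLt hj
    simp only at hab
    omega
  · subst heq
    exact hne (Prod.ext rfl (Fin.ext (hi.unique a.isLt b.isLt hj)))
  · have := hj.le_add_add_one hodd hℓ b.isLt hi
    simp only at hab
    omega

section Rank

variable {V : Type*} (s : Finset V) (pos : V → ℕ)

def rankIn (v : V) : ℕ := #{u ∈ s | pos u < pos v}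

variable {s pos}

theorem rankIn_lt_card {v : V} (hv : v ∈ s) : rankIn s pos v < #s :=
  card_lt_card <| filter_ssubset.2 ⟨v, hv, lt_irrefl _⟩

theorem rankIn_lt_rankIn {u v : V} (hu : u ∈ s) (h : pos u < pos v) :
    rankIn s pos u < rankIn s pos v :=
  card_lt_card <| (ssubset_iff_of_subset fun x hx => by
    simp only [mem_filter] at hx ⊢; exact ⟨hx.1, hx.2.trans h⟩).2
    ⟨u, by simp [hu, h], by simp⟩

theorem rankIn_injOn (hpos : ∀ u ∈ s, ∀ u' ∈ s, u ≠ u' → pos u ≠ pos u') :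
    Set.InjOn (rankIn s pos) s := by
  intro u hu v hv huv
  by_contra hne
  rcases (hpos u hu v hv hne).lt_or_gt with h | h
  · exact (rankIn_lt_rankIn hu h).ne huv
  · exact (rankIn_lt_rankIn hv h).ne' huv

theorem rankIn_add_one_le [DecidableEq V] {v : V} (hv : v ∈ s) :
    rankIn s pos v + 1 ≤ #{u ∈ s | pos u ≤ pos v} := by
  rw [rankIn, ← card_insert_of_notMem (s := {u ∈ s | pos u < pos v}) (a := v) (by simp)]
  exact card_le_card fun x hx => by
    rcases mem_insert.1 hx with rfl | hx
    · simp [hv]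
    · simp only [mem_filter] at hx ⊢; exact ⟨hx.1, hx.2.le⟩

end Rank

theorem IsCycleBlowup.nonempty_hom {V : Type} [Finite V] {G : SimpleGraph V} {ℓ : ℕ}
    (hG : IsCycleBlowup G ℓ) : Nonempty (G →g thresholdCycleBlowup ℓ G.cliqueNum) := by
  classical
  obtain ⟨W, pos, huniq, -, hclique, hcons, hpos, hord₁, hord₂⟩ := hG
  choose part hpart using fun v => (huniq v).exists
  have hpart_eq {v : V} {i : ZMod ℓ} (hv : v ∈ W i) : part v = i := (huniq v).unique (hpart v) hv
  set rank : V → ℕ := fun v => rankIn (W (part v)) pos v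
  have hrank_lt (v : V) : rank v < G.cliqueNum :=
    (rankIn_lt_card (hpart v)).trans_le (hclique _).card_le_cliqueNum
  have hcross {u v : V} (huv : G.Adj u v) (hi : part v = part u + 1) (hne : part u ≠ part v) :
      rank u + rank v + 1 < G.cliqueNum := by
    set A := {x ∈ W (part u) | pos x ≤ pos u}
    set B := {y ∈ W (part v) | pos y ≤ pos v}
    have hAB : Disjoint A B := disjoint_left.2 fun x hxA hxB =>
      hne ((hpart_eq (mem_filter.1 hxA).1).symm.trans (hpart_eq (mem_filter.1 hxB).1))
    have hadj {x y : V} (hx : x ∈ A) (hy : y ∈ B) : G.Adj x y := by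
      rw [mem_filter] at hx
      rw [mem_filter, hi] at hy
      have hv : v ∈ W (part u + 1) := hi ▸ hpart v
      exact hord₂ _ v hv y hy.1 x hx.1 hy.2 (hord₁ _ u (hpart u) x hx.1 v hv hx.2 huv)
    have hAB_clique : G.IsClique (↑(A ∪ B) : Set V) := by
      rw [coe_union, IsClique, Set.pairwise_union]
      exact ⟨(hclique _).subset (coe_subset.2 (filter_subset _ _)),
        (hclique _).subset (coe_subset.2 (filter_subset _ _)),
        fun x hx y hy _ => ⟨hadj hx hy, (hadj hx hy).symm⟩⟩
    have hcard := hAB_clique.card_le_cliqueNum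
    rw [card_union_of_disjoint hAB] at hcard
    have hu : rank u + 1 ≤ #A := rankIn_add_one_le (hpart u)
    have hv : rank v + 1 ≤ #B := rankIn_add_one_le (hpart v)
    omega
  refine ⟨⟨fun v => (part v, ⟨rank v, hrank_lt v⟩), fun {u v} huv => ?_⟩⟩
  simp only [thresholdCycleBlowup, fromRel_adj, ne_eq, Prod.ext_iff, Fin.ext_iff]
  by_cases hsame : part u = part v
  · refine ⟨fun h => huv.ne (rankIn_injOn (hpos _) (hpart u) (hsame ▸ hpart v) ?_),
      Or.inl (Or.inl hsame)⟩
    simpa only [rank, hsame] using h.2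
  refine ⟨fun h => hsame h.1, ?_⟩
  rcases hcons _ _ u (hpart u) v (hpart v) huv with h | h | h
  · exact absurd h hsame
  · exact Or.inl (Or.inr ⟨h, hcross huv h hsame⟩)
  · have h' : part u = part v + 1 := by rw [h, sub_add_cancel]
    have := hcross huv.symm h' (Ne.symm hsame)
    exact Or.inr (Or.inr ⟨h', by omega⟩)

theorem cycleBlowup_colorable_general {V : Type} [Fintype V]
    (ℓ : ℕ) (hodd : Odd ℓ) (hℓ : 5 ≤ ℓ) (G : SimpleGraph V)
    (hG : IsCycleBlowup G ℓ) :
    G.Colorable ((ℓ * G.cliqueNum) ⌈/⌉ (ℓ - 1)) := by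
  obtain ⟨f⟩ := hG.nonempty_hom
  refine .of_hom f (thresholdCycleBlowup_colorable hodd (by omega) ?_)
  simpa only [smul_eq_mul] using le_smul_ceilDiv (b := ℓ * G.cliqueNum) (by omega : 0 < ℓ - 1)

/-- Every blow-up of a cycle of odd length `ℓ ≥ 5` satisfies
`χ(G) ≤ ⌈(ℓ/(ℓ-1))·ω(G)⌉`. -/
theorem cycleBlowup_colorable {V : Type} [Fintype V] [DecidableEq V]
    (ℓ : ℕ) (hodd : Odd ℓ) (hℓ : 5 ≤ ℓ) (G : SimpleGraph V)
    (hG : IsCycleBlowup G ℓ) :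
    G.Colorable ((ℓ * G.cliqueNum) ⌈/⌉ (ℓ - 1)) :=
  cycleBlowup_colorable_general ℓ hodd hℓ G hG
end

section
/- For every odd integer ℓ ≥ 5, the clique blow-up of the cycle C_ℓ in which every vertex is replaced by a clique of size t has clique number 2t and chromatic number exactly ⌈(ℓ/(ℓ−1))·2t⌉ = ⌈2tℓ/(ℓ−1)⌉; hence the bound χ(G) ≤ ⌈(ℓ/(ℓ−1))·ω(G)⌉ for ℓ-holed graphs is sharp. -/
open SimpleGraph

/-- The clique blow-up of the cycle `C_ℓ` with parameter `t`: every vertex `i` of the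
cycle is replaced by a clique `{i} × Fin t`, cliques of adjacent cycle vertices are
complete to each other, and there are no other edges. -/
def cliqueBlowupCycle (ℓ t : ℕ) : SimpleGraph (Fin ℓ × Fin t) :=
  SimpleGraph.fromRel (fun x y => x.1 = y.1 ∨ (cycleGraph ℓ).Adj x.1 y.1)

/- ### Auxiliary lemmas -/

private lemma mod_ne_of_gap {k a b t j j' : ℕ} (h1 : a + t ≤ b) (h2 : b + t ≤ a + k)
    (hj : j < t) (hj' : j' < t) : (a + j) % k ≠ (b + j') % k := by
  intro h
  have hle : a + j ≤ b + j' := by omega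
  have hdvd : k ∣ (b + j') - (a + j) := (Nat.modEq_iff_dvd' hle).mp h
  have hk : k ≤ (b + j') - (a + j) := Nat.le_of_dvd (by omega) hdvd
  omega

private lemma mod_ne_same {k a j j' : ℕ} (hj : j < k) (hj' : j' < k) (hne : j ≠ j') :
    (a + j) % k ≠ (a + j') % k := by
  intro h
  rcases Nat.lt_or_ge j j' with hlt | hge
  · have hdvd : k ∣ (a + j') - (a + j) := (Nat.modEq_iff_dvd' (by omega)).mp h
    have := Nat.le_of_dvd (by omega) hdvd
    omega
  · have hlt : j' < j := by omega
    have hdvd : k ∣ (a + j) - (a + j') := (Nat.modEq_iff_dvd' (by omega)).mp h.symm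
    have := Nat.le_of_dvd (by omega) hdvd
    omega

/-- Adjacency in the cycle graph, expressed in terms of values. -/
private lemma cycle_adj_val {ℓ : ℕ} (h2 : 2 ≤ ℓ) {u v : Fin ℓ}
    (h : (cycleGraph ℓ).Adj u v) :
    u.val + 1 = v.val ∨ v.val + 1 = u.val ∨ (u.val = 0 ∧ v.val = ℓ - 1) ∨
      (v.val = 0 ∧ u.val = ℓ - 1) := by
  haveI : NeZero ℓ := ⟨by omega⟩
  rw [cycleGraph_adj'] at h
  have hone : (1 : Fin ℓ).val = 1 := by
    rw [Fin.val_one']; exact Nat.mod_eq_of_lt (by omega)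
  have hu := u.isLt
  have hv := v.isLt
  rcases h with h | h
  · have huv : u = v + 1 := by
      have hs : u - v = 1 := Fin.ext (by rw [h, hone])
      have := sub_eq_iff_eq_add.mp hs
      rwa [add_comm] at this
    have : u.val = (v.val + 1) % ℓ := by
      rw [huv, Fin.add_def, hone]
    rcases Nat.lt_or_ge (v.val + 1) ℓ with h3 | h3
    · rw [Nat.mod_eq_of_lt h3] at this; omega
    · have h4 : v.val + 1 = ℓ := by omega
      rw [h4, Nat.mod_self] at this; omega
  · have huv : v = u + 1 := by
      have hs : v - u = 1 := Fin.ext (by rw [h, hone])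
      have := sub_eq_iff_eq_add.mp hs
      rwa [add_comm] at this
    have : v.val = (u.val + 1) % ℓ := by
      rw [huv, Fin.add_def, hone]
    rcases Nat.lt_or_ge (u.val + 1) ℓ with h3 | h3
    · rw [Nat.mod_eq_of_lt h3] at this; omega
    · have h4 : u.val + 1 = ℓ := by omega
      rw [h4, Nat.mod_self] at this; omega

private lemma cycle_adj_succ {ℓ : ℕ} [NeZero ℓ] (h2 : 2 ≤ ℓ) (v : Fin ℓ) :
    (cycleGraph ℓ).Adj v (v + 1) := by
  haveI : NeZero ℓ := ⟨by omega⟩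
  rw [cycleGraph_adj']
  right
  rw [add_sub_cancel_left, Fin.val_one']
  exact Nat.mod_eq_of_lt (by omega)

private lemma cycle_adj_of_val_succ {ℓ : ℕ} (h2 : 2 ≤ ℓ) {u v : Fin ℓ}
    (h : v.val = (u.val + 1) % ℓ) : (cycleGraph ℓ).Adj u v := by
  haveI : NeZero ℓ := ⟨by omega⟩
  have : v = u + 1 := by
    apply Fin.ext
    rw [h, Fin.add_def, Fin.val_one', Nat.mod_eq_of_lt (show 1 < ℓ by omega)]
  rw [this]
  exact cycle_adj_succ h2 u

/-- The cycle of length `≥ 5` has no triangles. -/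
private lemma cycle_triangle_free {ℓ : ℕ} (h5 : 5 ≤ ℓ) {a b c : Fin ℓ}
    (hab : (cycleGraph ℓ).Adj a b) (hac : (cycleGraph ℓ).Adj a c)
    (hbc : (cycleGraph ℓ).Adj b c) : False := by
  have h1 := cycle_adj_val (by omega) hab
  have h2 := cycle_adj_val (by omega) hac
  have h3 := cycle_adj_val (by omega) hbc
  have ha := a.isLt
  have hb := b.isLt
  have hc := c.isLt
  have n1 : a.val ≠ b.val := fun h => hab.ne (Fin.ext h)
  have n2 : a.val ≠ c.val := fun h => hac.ne (Fin.ext h)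
  have n3 : b.val ≠ c.val := fun h => hbc.ne (Fin.ext h)
  omega

/-- Any independent set in the clique blow-up of a cycle of length `ℓ ≥ 5` has at most
`ℓ/2` elements (statement: twice the cardinality is at most `ℓ`). -/
private lemma indep_card_le {ℓ t : ℕ} (h5 : 5 ≤ ℓ) (s : Finset (Fin ℓ × Fin t))
    (hind : ∀ x ∈ s, ∀ y ∈ s, x ≠ y → ¬ (cliqueBlowupCycle ℓ t).Adj x y) :
    2 * s.card ≤ ℓ := by
  classical
  haveI : NeZero ℓ := ⟨by omega⟩
  set I := s.image Prod.fst with hI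
  have hfst : ∀ x ∈ s, ∀ y ∈ s, x.1 = y.1 → x = y := by
    intro x hx y hy hxy
    by_contra hne
    exact hind x hx y hy hne (by
      rw [cliqueBlowupCycle, SimpleGraph.fromRel_adj]
      exact ⟨hne, Or.inl (Or.inl hxy)⟩)
  have hcard : I.card = s.card := Finset.card_image_of_injOn hfst
  have hsucc : ∀ a ∈ I, a + 1 ∉ I := by
    intro a haI hsI
    obtain ⟨x, hx, hxa⟩ := Finset.mem_image.mp haI
    obtain ⟨y, hy, hya⟩ := Finset.mem_image.mp hsI
    have hane : a ≠ a + 1 := (cycle_adj_succ (by omega) a).ne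
    have hxyne : x ≠ y := by
      intro h
      have h2 := congrArg Prod.fst h
      rw [hxa, hya] at h2
      exact hane h2
    apply hind x hx y hy hxyne
    rw [cliqueBlowupCycle, SimpleGraph.fromRel_adj]
    refine ⟨hxyne, Or.inl (Or.inr ?_)⟩
    rw [hxa, hya]
    exact cycle_adj_succ (by omega) a
  have hdisj : Disjoint I (I.image (· + 1)) := by
    rw [Finset.disjoint_left]
    intro a haI hmem
    obtain ⟨b, hb, hba⟩ := Finset.mem_image.mp hmem
    exact hsucc b hb (hba ▸ haI)
  have hcard2 : (I.image (· + 1)).card = I.card :=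
    Finset.card_image_of_injective _ (add_left_injective 1)
  have hunion : I.card + (I.image (· + 1)).card ≤ ℓ := by
    rw [← Finset.card_union_of_disjoint hdisj]
    calc (I ∪ I.image (· + 1)).card ≤ Fintype.card (Fin ℓ) := Finset.card_le_univ _
    _ = ℓ := Fintype.card_fin ℓ
  omega

/-- For every odd `ℓ ≥ 5` and `t ≥ 1`, the clique blow-up of `C_ℓ` with cliques of size
`t` has clique number `2t` and chromatic number exactly `⌈2tℓ/(ℓ-1)⌉`; hence the bound
`χ ≤ ⌈(ℓ/(ℓ-1))·ω⌉` for `ℓ`-holed graphs is sharp. -/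
theorem cliqueBlowupCycle_sharp (ℓ t : ℕ) (hodd : Odd ℓ) (hℓ : 5 ≤ ℓ) (ht : 0 < t) :
    (cliqueBlowupCycle ℓ t).cliqueNum = 2 * t ∧
    (cliqueBlowupCycle ℓ t).chromaticNumber = (((2 * t * ℓ) ⌈/⌉ (ℓ - 1) : ℕ) : ℕ∞) := by
  classical
  obtain ⟨m, hm⟩ := hodd
  subst hm
  set ℓ := 2 * m + 1 with hℓdef
  have h2 : 2 ≤ ℓ := by omega
  have hm2 : 2 ≤ m := by omega
  set G := cliqueBlowupCycle ℓ t with hG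
  -- ### Clique number
  have hclique : G.cliqueNum = 2 * t := by
    -- upper bound
    have hub : ∀ n : ℕ, ∀ s : Finset (Fin ℓ × Fin t), G.IsNClique n s → n ≤ 2 * t := by
      intro n s hs
      set I := s.image Prod.fst with hI
      have hIclique : ∀ a ∈ I, ∀ b ∈ I, a ≠ b → (cycleGraph ℓ).Adj a b := by
        intro a ha b hb hab
        obtain ⟨x, hx, hxa⟩ := Finset.mem_image.mp ha
        obtain ⟨y, hy, hyb⟩ := Finset.mem_image.mp hb
        have hxy : x ≠ y := by intro h; apply hab; rw [← hxa, ← hyb, h]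
        have := hs.isClique hx hy hxy
        rw [hG, cliqueBlowupCycle, SimpleGraph.fromRel_adj] at this
        rcases this.2 with (h | h) | (h | h)
        · exact absurd (hxa ▸ hyb ▸ h) hab
        · exact hxa ▸ hyb ▸ h
        · exact absurd (hxa ▸ hyb ▸ h.symm) hab
        · exact (hxa ▸ hyb ▸ h).symm
      have hIcard : I.card ≤ 2 := by
        by_contra hlt
        have h3 : 2 < I.card := by omega
        obtain ⟨a, b, c, ha, hb, hc, hab, hac, hbc⟩ := Finset.two_lt_card_iff.mp h3
        exact cycle_triangle_free hℓ (hIclique a ha b hb hab)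
          (hIclique a ha c hc hac) (hIclique b hb c hc hbc)
      have hsub : s ⊆ I ×ˢ (Finset.univ : Finset (Fin t)) := by
        intro x hx
        rw [Finset.mem_product]
        exact ⟨Finset.mem_image_of_mem _ hx, Finset.mem_univ _⟩
      have := Finset.card_le_card hsub
      rw [Finset.card_product, Finset.card_univ, Fintype.card_fin] at this
      calc n = s.card := hs.card_eq.symm
      _ ≤ I.card * t := this
      _ ≤ 2 * t := Nat.mul_le_mul_right t hIcard
    -- lower bound : explicit 2t-clique
    have hadj01 : (cycleGraph ℓ).Adj 0 1 := by
      have := cycle_adj_succ h2 0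
      rwa [zero_add] at this
    have hlb : G.IsNClique (2 * t) (({0, 1} : Finset (Fin ℓ)) ×ˢ Finset.univ) := by
      constructor
      · rintro ⟨a, j⟩ hx ⟨b, j'⟩ hy hne
        simp only [Finset.coe_product, Set.mem_prod, Finset.mem_coe,
          Finset.mem_insert, Finset.mem_singleton] at hx hy
        rw [hG, cliqueBlowupCycle, SimpleGraph.fromRel_adj]
        refine ⟨hne, ?_⟩
        rcases hx.1 with rfl | rfl <;> rcases hy.1 with rfl | rfl
        · exact Or.inl (Or.inl rfl)
        · exact Or.inl (Or.inr hadj01)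
        · exact Or.inr (Or.inr hadj01)
        · exact Or.inl (Or.inl rfl)
      · rw [Finset.card_product, Finset.card_univ, Fintype.card_fin,
          Finset.card_insert_of_notMem (by
            simp only [Finset.mem_singleton]
            intro h
            exact hadj01.ne h), Finset.card_singleton]
    obtain ⟨s, hs⟩ := G.exists_isNClique_cliqueNum
    refine le_antisymm (hub _ s hs) ?_
    have := IsClique.card_le_cliqueNum (tc := hlb.isClique)
    rwa [hlb.card_eq] at this
  refine ⟨hclique, ?_⟩
  -- ### Chromatic number
  set k := (2 * t * ℓ) ⌈/⌉ (ℓ - 1) with hkdef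
  have hl1 : 0 < ℓ - 1 := by omega
  have hmk' : 2 * t * ℓ ≤ (ℓ - 1) * k := (ceilDiv_le_iff_le_mul hl1).mp le_rfl
  have hmk : ℓ * t ≤ m * k := by
    have h1 : 2 * (ℓ * t) ≤ 2 * (m * k) := by
      calc 2 * (ℓ * t) = 2 * t * ℓ := by ring
      _ ≤ (ℓ - 1) * k := hmk'
      _ = 2 * (m * k) := by rw [show ℓ - 1 = 2 * m by omega]; ring
    exact Nat.le_of_mul_le_mul_left h1 (by norm_num)
  have hk2t : 2 * t + 1 ≤ k := by
    by_contra hcon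
    have hk2 : k ≤ 2 * t := by omega
    have h1 : 2 * t * ℓ ≤ (ℓ - 1) * (2 * t) := (ceilDiv_le_iff_le_mul hl1).mp hk2
    have h2' : (ℓ - 1) * (2 * t) < ℓ * (2 * t) :=
      mul_lt_mul_of_pos_right (by omega) (by omega)
    have h3 : ℓ * (2 * t) = 2 * t * ℓ := by ring
    omega
  have hk0 : 0 < k := by omega
  -- the shift sequence
  set c := k - 2 * t with hcdef
  have hc : k = 2 * t + c := by omega
  set E := m * k - ℓ * t with hEdef
  have hE : ℓ * t + E = m * k := Nat.add_sub_cancel' hmk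
  have hEc : E + t = m * c := by
    have h2' : ℓ * t + E = m * (2 * t + c) := by rw [← hc]; exact hE
    have h3 : ℓ * t = 2 * (m * t) + t := by rw [hℓdef]; ring
    have h4 : m * (2 * t + c) = 2 * (m * t) + m * c := by ring
    linarith
  set A : ℕ → ℕ := fun i => t * i + min E (c * i) with hAdef
  have hA1 : ∀ i, A i + t ≤ A (i + 1) := by
    intro i
    have h1 : c * i ≤ c * (i + 1) := Nat.mul_le_mul_left c (Nat.le_succ i)
    have h2' : min E (c * i) ≤ min E (c * (i + 1)) := min_le_min le_rfl h1
    have h3 : t * (i + 1) = t * i + t := by ring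
    simp only [hAdef]
    linarith
  have hA2 : ∀ i, A (i + 1) + t ≤ A i + k := by
    intro i
    have h1 : min E (c * (i + 1)) ≤ min E (c * i) + c := by
      have he : c * (i + 1) = c * i + c := by ring
      rw [he]
      calc min E (c * i + c) ≤ min (E + c) (c * i + c) :=
            min_le_min (Nat.le_add_right _ _) le_rfl
      _ = min E (c * i) + c := min_add_add_right E (c * i) c
    have h3 : t * (i + 1) = t * i + t := by ring
    simp only [hAdef]
    linarith
  have hA0 : A 0 = 0 := by simp [hAdef]
  have hAl : A (2 * m) + t = m * k := by
    have h1 : E ≤ c * (2 * m) := by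
      have h2' : E ≤ m * c := by omega
      have h3 : m * c ≤ c * (2 * m) := by
        calc m * c = c * m := by ring
        _ ≤ c * (2 * m) := Nat.mul_le_mul_left c (by omega)
      omega
    have h4 : min E (c * (2 * m)) = E := min_eq_left h1
    have h5 : ℓ * t = t * (2 * m) + t := by rw [hℓdef]; ring
    simp only [hAdef, h4]
    omega
  -- the explicit coloring
  have hkey : ∀ u v : Fin ℓ, ∀ ju jv : Fin t, u.val + 1 = v.val →
      (A u.val + ju.val) % k ≠ (A v.val + jv.val) % k := by
    intro u v ju jv huv
    rw [← huv]
    exact mod_ne_of_gap (hA1 u.val) (hA2 u.val) ju.isLt jv.isLt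
  have hkey2 : ∀ u v : Fin ℓ, ∀ ju jv : Fin t, u.val = ℓ - 1 → v.val = 0 →
      (A u.val + ju.val) % k ≠ (A v.val + jv.val) % k := by
    intro u v ju jv hu hv
    have hu' : u.val = 2 * m := by omega
    rw [hu', hv]
    have hrw : (A 0 + jv.val) % k = (m * k + jv.val) % k := by
      rw [hA0, zero_add, add_comm (m * k) jv.val, Nat.add_mul_mod_self_right]
    rw [hrw]
    exact mod_ne_of_gap (le_of_eq hAl) (by omega) ju.isLt jv.isLt
  let C : G.Coloring (Fin k) := SimpleGraph.Coloring.mk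
    (fun x => ⟨(A x.1.val + x.2.val) % k, Nat.mod_lt _ hk0⟩)
    (by
      intro x y hadj
      rw [hG, cliqueBlowupCycle, SimpleGraph.fromRel_adj] at hadj
      obtain ⟨hne, hr⟩ := hadj
      intro hCeq
      have hv : (A x.1.val + x.2.val) % k = (A y.1.val + y.2.val) % k :=
        congrArg Fin.val hCeq
      have hsame : x.1 = y.1 → False := by
        intro hfst
        have hsnd : x.2.val ≠ y.2.val := by
          intro h
          exact hne (Prod.ext hfst (Fin.ext h))
        rw [hfst] at hv
        exact mod_ne_same (lt_of_lt_of_le x.2.isLt (by omega))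
          (lt_of_lt_of_le y.2.isLt (by omega)) hsnd hv
      have hcyc : (cycleGraph ℓ).Adj x.1 y.1 → False := by
        intro hadj'
        rcases cycle_adj_val h2 hadj' with h | h | ⟨h1, h2'⟩ | ⟨h1, h2'⟩
        · exact hkey x.1 y.1 x.2 y.2 h hv
        · exact hkey y.1 x.1 y.2 x.2 h hv.symm
        · exact hkey2 y.1 x.1 y.2 x.2 h2' h1 hv.symm
        · exact hkey2 x.1 y.1 x.2 y.2 h2' h1 hv
      rcases hr with (h | h) | (h | h)
      · exact hsame h
      · exact hcyc h
      · exact hsame h.symm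
      · exact hcyc h.symm)
  have hcolk : G.Colorable k := ⟨C⟩
  have hub : G.chromaticNumber ≤ k := hcolk.chromaticNumber_le
  -- lower bound via counting
  have hcount : ∀ n : ℕ, G.Coloring (Fin n) → k ≤ n := by
    intro n C0
    have hfiber : ∀ b : Fin n,
        ((Finset.univ : Finset (Fin ℓ × Fin t)).filter (fun x => C0 x = b)).card ≤ m := by
      intro b
      have hind : ∀ x ∈ (Finset.univ : Finset (Fin ℓ × Fin t)).filter (fun x => C0 x = b),
          ∀ y ∈ (Finset.univ : Finset (Fin ℓ × Fin t)).filter (fun x => C0 x = b),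
          x ≠ y → ¬ G.Adj x y := by
        intro x hx y hy _ hadj
        rw [Finset.mem_filter] at hx hy
        exact C0.valid hadj (hx.2.trans hy.2.symm)
      have := indep_card_le hℓ _ hind
      omega
    have hsum : (Finset.univ : Finset (Fin ℓ × Fin t)).card =
        ∑ b : Fin n, ((Finset.univ : Finset (Fin ℓ × Fin t)).filter (fun x => C0 x = b)).card :=
      Finset.card_eq_sum_card_fiberwise (fun x _ => Finset.mem_univ (C0 x))
    have hcard : ℓ * t ≤ n * m := by
      have h1 : (Finset.univ : Finset (Fin ℓ × Fin t)).card = ℓ * t := by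
        rw [Finset.card_univ, Fintype.card_prod, Fintype.card_fin, Fintype.card_fin]
      have h2' : ∑ b : Fin n, ((Finset.univ : Finset (Fin ℓ × Fin t)).filter
          (fun x => C0 x = b)).card ≤ ∑ _b : Fin n, m :=
        Finset.sum_le_sum (fun b _ => hfiber b)
      have h3 : ∑ _b : Fin n, m = n * m := by
        rw [Finset.sum_const, Finset.card_univ, Fintype.card_fin, smul_eq_mul]
      omega
    rw [hkdef]
    rw [ceilDiv_le_iff_le_mul hl1]
    calc 2 * t * ℓ = 2 * (ℓ * t) := by ring
    _ ≤ 2 * (n * m) := Nat.mul_le_mul_left 2 hcard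
    _ = (ℓ - 1) * n := by rw [show ℓ - 1 = 2 * m by omega]; ring
  have hfin : G.chromaticNumber ≠ ⊤ := (lt_of_le_of_lt hub (by exact_mod_cast ENat.coe_lt_top k)).ne
  obtain ⟨C0⟩ := G.colorable_chromaticNumber_of_fintype
  have hk_le : k ≤ G.chromaticNumber.toNat := hcount _ C0
  have heq : G.chromaticNumber = (G.chromaticNumber.toNat : ℕ∞) := (ENat.coe_toNat hfin).symm
  rw [heq] at hub ⊢
  have hle : G.chromaticNumber.toNat ≤ k := by exact_mod_cast hub
  exact_mod_cast congrArg (Nat.cast : ℕ → ℕ∞) (le_antisymm hle hk_le)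
end

section
/- Let m ≥ 3 be odd, let P = Z₀Z₁⋯Z_m be a blow-up of a path on ordered cliques where consecutive bipartite graphs G[Z_j, Z_{j+1}] obey the orderings, let ω = ω(P), and let χ′ > ω be an integer. Suppose |Z₀| ≤ ω/2, the clique Z₀ is precolored with a color set C₀ and Z_m is precolored with a color set C_m (from a palette of χ′ colors), and |C₀ ∩ C_m| ≤ (m−1)(χ′−ω)/2. If at most one of Z₀, Z_m has its colors assigned to specific vertices (the other only has its color set fixed), then the precoloring extends to a proper χ′-coloring of P. -/
open SimpleGraph Finset

namespace PBX
variable {χ' : ℕ}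

def pre (s : ℕ → Fin χ') (t : ℕ) : Finset (Fin χ') := (Finset.range t).image s
def Chain (s : ℕ → Fin χ') (n : ℕ) : Prop := ∀ r < n, ∀ q < n, s r = s q → r = q
def Cross (ω : ℕ) (s : ℕ → Fin χ') (n : ℕ) (s' : ℕ → Fin χ') (n' : ℕ) : Prop :=
  ∀ r < n, ∀ q < n', r + q + 2 ≤ ω → s r ≠ s' q
def Inv (ω : ℕ) (C₀ : Finset (Fin χ')) (s : ℕ → Fin χ') (n κ : ℕ) : Prop :=
  ∀ t, (C₀ ∩ pre s (min t n)).card ≤ t - (ω - C₀.card) + κ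

lemma pre_mono (s : ℕ → Fin χ') {t t' : ℕ} (h : t ≤ t') : pre s t ⊆ pre s t' :=
  image_subset_image (by simpa using Finset.range_subset_range.2 h)
lemma card_pre_le (s : ℕ → Fin χ') (t : ℕ) : (pre s t).card ≤ t := by
  refine (Finset.card_image_le).trans ?_; simp
lemma pre_update (s : ℕ → Fin χ') (k : ℕ) (a : Fin χ') {t : ℕ} (h : t ≤ k) :
    pre (Function.update s k a) t = pre s t := by
  unfold pre
  apply Finset.image_congr
  intro r hr
  simp only [mem_coe, mem_range] at hr
  exact Function.update_of_ne (by omega) _ _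
lemma pre_update_succ (s : ℕ → Fin χ') (k : ℕ) (a : Fin χ') :
    pre (Function.update s k a) (k + 1) = insert a (pre s k) := by
  unfold pre
  rw [Finset.range_add_one, Finset.image_insert, Function.update_self]
  congr 1
  exact pre_update s k a le_rfl
lemma mem_pre {s : ℕ → Fin χ'} {t : ℕ} {a : Fin χ'} :
    a ∈ pre s t ↔ ∃ r < t, s r = a := by simp [pre]
lemma card_pre_chain {s : ℕ → Fin χ'} {n : ℕ} (h : Chain s n) {t : ℕ} (ht : t ≤ n) :
    (pre s t).card = t := by
  rw [pre, Finset.card_image_of_injOn, Finset.card_range]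
  intro r hr q hq
  simp only [mem_coe, mem_range] at hr hq
  exact h r (lt_of_lt_of_le hr ht) q (lt_of_lt_of_le hq ht)
lemma card_split (C X Y : Finset (Fin χ')) :
    C.card ≤ (C \ (X ∪ Y)).card + (C ∩ X).card + (C ∩ Y).card := by
  have hsub : C ⊆ (C \ (X ∪ Y)) ∪ ((C ∩ X) ∪ (C ∩ Y)) := by
    intro a ha
    by_cases hx : a ∈ X
    · simp [ha, hx]
    · by_cases hy : a ∈ Y
      · simp [ha, hy]
      · simp [ha, hx, hy]
  calc C.card ≤ ((C \ (X ∪ Y)) ∪ ((C ∩ X) ∪ (C ∩ Y))).card := Finset.card_le_card hsub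
    _ ≤ (C \ (X ∪ Y)).card + ((C ∩ X) ∪ (C ∩ Y)).card := Finset.card_union_le _ _
    _ ≤ _ := by
        have := Finset.card_union_le (C ∩ X) (C ∩ Y)
        omega

/-- Step 1 of a pair: build the even-level chain `s'`, pushing as many `C₀`-colors
as possible to early positions. -/
lemma step1 (ω : ℕ) (C₀ : Finset (Fin χ')) (hχ : ω < χ') (hsmall : 2 * C₀.card ≤ ω)
    (s'' : ℕ → Fin χ') (n'' κ : ℕ) (hInv : Inv ω C₀ s'' n'' κ)
    (n' : ℕ) (hn' : n' + 1 ≤ ω) :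
    ∃ s' : ℕ → Fin χ', Chain s' n' ∧ Cross ω s' n' s'' n'' ∧
      ∀ x ≤ n', min x C₀.card ≤ (C₀ ∩ pre s' x).card + κ := by
  have hchi0 : 0 < χ' := by omega
  have key : ∀ k, k ≤ n' → ∃ s' : ℕ → Fin χ', Chain s' k ∧
      (∀ r < k, ∀ q < n'', r + q + 2 ≤ ω → s' r ≠ s'' q) ∧
      (∀ x ≤ k, min x C₀.card ≤ (C₀ ∩ pre s' x).card + κ) := by
    intro k
    induction k with
    | zero =>
      intro _
      refine ⟨fun _ => ⟨0, hchi0⟩, ?_, ?_, ?_⟩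
      · intro r hr; omega
      · intro r hr; omega
      · intro x hx
        interval_cases x
        simp
    | succ k ih =>
      intro hk1
      obtain ⟨s', hch, hcr, hg⟩ := ih (by omega)
      set Fb := pre s'' (min (ω - 1 - k) n'') ∪ pre s' k with hFb
      have hFbcard : Fb.card ≤ ω - 1 := by
        have h1 := Finset.card_union_le (pre s'' (min (ω - 1 - k) n'')) (pre s' k)
        rw [← hFb] at h1
        have h2 := card_pre_le s'' (min (ω - 1 - k) n'')
        have h3 := card_pre_le s' k
        have : min (ω - 1 - k) n'' ≤ ω - 1 - k := min_le_left _ _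
        omega
      -- choose the new color
      have hmain : ∃ a : Fin χ', a ∉ Fb ∧
          (min (k+1) C₀.card ≤ (C₀ ∩ insert a (pre s' k)).card + κ) := by
        by_cases hb : (C₀ \ Fb).Nonempty
        · obtain ⟨a, ha⟩ := hb
          rw [Finset.mem_sdiff] at ha
          refine ⟨a, ha.2, ?_⟩
          have hnotin : a ∉ pre s' k := fun h => ha.2 (Finset.mem_union_right _ h)
          have : C₀ ∩ insert a (pre s' k) = insert a (C₀ ∩ pre s' k) := by
            rw [Finset.insert_inter_distrib]
            simp [ha.1]
          rw [this, Finset.card_insert_of_notMem (fun h => hnotin (Finset.mem_inter.1 h).2)]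
          have := hg k le_rfl
          omega
        · -- no new C₀ color available: C₀ ⊆ Fb, use counting
          have hsub : C₀ ⊆ Fb := by
            intro a ha
            by_contra hna
            exact hb ⟨a, Finset.mem_sdiff.2 ⟨ha, hna⟩⟩
          have hsplit := card_split C₀ (pre s'' (min (ω - 1 - k) n'')) (pre s' k)
          have hzero : (C₀ \ Fb).card = 0 := by
            rw [Finset.card_eq_zero, Finset.sdiff_eq_empty_iff_subset]
            exact hsub
          rw [hFb] at hzero
          have hβ := hInv (ω - 1 - k)
          have hβ' : (C₀ ∩ pre s'' (min (ω - 1 - k) n'')).card ≤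
              (ω - 1 - k) - (ω - C₀.card) + κ := hβ
          -- pick any color outside Fb
          have hne : (Finset.univ \ Fb).Nonempty := by
            rw [← Finset.card_pos, Finset.card_sdiff_of_subset (Finset.subset_univ _)]
            have : (Finset.univ : Finset (Fin χ')).card = χ' := by simp
            omega
          obtain ⟨a, ha⟩ := hne
          rw [Finset.mem_sdiff] at ha
          refine ⟨a, ha.2, ?_⟩
          have hmono : (C₀ ∩ pre s' k).card ≤ (C₀ ∩ insert a (pre s' k)).card :=
            Finset.card_le_card
              (Finset.inter_subset_inter (Finset.Subset.refl C₀) (Finset.subset_insert a _))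
          omega
      obtain ⟨a, haF, hacount⟩ := hmain
      refine ⟨Function.update s' k a, ?_, ?_, ?_⟩
      · -- Chain (k+1)
        intro r hr q hq heq
        rcases Nat.lt_or_ge r k with hrk | hrk
        · rcases Nat.lt_or_ge q k with hqk | hqk
          · rw [Function.update_of_ne (by omega), Function.update_of_ne (by omega)] at heq
            exact hch r hrk q hqk heq
          · have hqk' : q = k := by omega
            rw [Function.update_of_ne (by omega), hqk', Function.update_self] at heq
            exact absurd (Finset.mem_union_right _ (mem_pre.2 ⟨r, hrk, heq⟩)) haF
        · have hrk' : r = k := by omega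
          rcases Nat.lt_or_ge q k with hqk | hqk
          · rw [hrk', Function.update_self, Function.update_of_ne (by omega)] at heq
            exact absurd (Finset.mem_union_right _ (mem_pre.2 ⟨q, hqk, heq.symm⟩)) haF
          · omega
      · -- cross
        intro r hr q hq hsum
        rcases Nat.lt_or_ge r k with hrk | hrk
        · rw [Function.update_of_ne (by omega)]
          exact hcr r hrk q hq hsum
        · have hrk' : r = k := by omega
          rw [hrk', Function.update_self]
          intro heq
          exact haF (Finset.mem_union_left _ (mem_pre.2 ⟨q, by omega, heq.symm⟩))
      · -- count
        intro x hx
        rcases Nat.lt_or_ge x (k+1) with hxk | hxk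
        · rw [pre_update s' k a (by omega)]
          exact hg x (by omega)
        · have hx' : x = k + 1 := by omega
          subst hx'
          rw [pre_update_succ]
          exact hacount
  obtain ⟨s', h1, h2, h3⟩ := key n' le_rfl
  exact ⟨s', h1, h2, h3⟩

/-- Step 2 of a pair: build the odd-level chain `s`, avoiding `C₀`-colors at early
positions whenever possible; the number of forced early bad colors drops by `χ' - ω`. -/
lemma step2 (ω : ℕ) (C₀ : Finset (Fin χ')) (hχ : ω < χ') (hsmall : 2 * C₀.card ≤ ω)
    (s' : ℕ → Fin χ') (n' κ : ℕ)
    (hg : ∀ x ≤ n', min x C₀.card ≤ (C₀ ∩ pre s' x).card + κ)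
    (n : ℕ) (hn : n + 1 ≤ ω) :
    ∃ s : ℕ → Fin χ', Chain s n ∧ Cross ω s n s' n' ∧ Inv ω C₀ s n (κ - (χ' - ω)) := by
  have hchi0 : 0 < χ' := by omega
  have key : ∀ k, k ≤ n → ∃ s : ℕ → Fin χ', Chain s k ∧
      (∀ r < k, ∀ q < n', r + q + 2 ≤ ω → s r ≠ s' q) ∧
      (∀ x ≤ k, (C₀ ∩ pre s x).card ≤ x - (ω - C₀.card) + (κ - (χ' - ω))) := by
    intro k
    induction k with
    | zero =>
      intro _
      refine ⟨fun _ => ⟨0, hchi0⟩, ?_, ?_, ?_⟩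
      · intro r hr; omega
      · intro r hr; omega
      · intro x hx
        interval_cases x
        simp [pre]
    | succ k ih =>
      intro hk1
      obtain ⟨s, hch, hcr, hbd⟩ := ih (by omega)
      set Fb := pre s' (min (ω - 1 - k) n') ∪ pre s k with hFb
      have hFbcard : Fb.card ≤ ω - 1 := by
        have h1 := Finset.card_union_le (pre s' (min (ω - 1 - k) n')) (pre s k)
        rw [← hFb] at h1
        have h2 := card_pre_le s' (min (ω - 1 - k) n')
        have h3 := card_pre_le s k
        have : min (ω - 1 - k) n' ≤ ω - 1 - k := min_le_left _ _
        omega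
      have hmain : ∃ a : Fin χ', a ∉ Fb ∧
          (C₀ ∩ insert a (pre s k)).card ≤ (k+1) - (ω - C₀.card) + (κ - (χ' - ω)) := by
        have hbdk := hbd k le_rfl
        by_cases hfree : (Finset.univ \ (Fb ∪ C₀)).Nonempty
        · obtain ⟨a, ha⟩ := hfree
          rw [Finset.mem_sdiff, Finset.mem_union] at ha
          push_neg at ha
          refine ⟨a, ha.2.1, ?_⟩
          have : C₀ ∩ insert a (pre s k) = C₀ ∩ pre s k := by
            rw [Finset.inter_insert_of_notMem ha.2.2]
          rw [this]
          omega
        · -- forced step: count colors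
          have hcover : ∀ b : Fin χ', b ∈ Fb ∪ C₀ := by
            intro b
            by_contra hb
            exact hfree ⟨b, Finset.mem_sdiff.2 ⟨Finset.mem_univ b, hb⟩⟩
          have hcover2 : (Finset.univ : Finset (Fin χ')) ⊆
              (pre s' (min (ω - 1 - k) n') ∪ C₀) ∪ (pre s k \ C₀) := by
            intro b _
            have := hcover b
            rw [hFb, Finset.mem_union, Finset.mem_union] at this
            rcases this with (h | h) | h
            · exact Finset.mem_union_left _ (Finset.mem_union_left _ h)
            · by_cases hbC : b ∈ C₀
              · exact Finset.mem_union_left _ (Finset.mem_union_right _ hbC)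
              · exact Finset.mem_union_right _ (Finset.mem_sdiff.2 ⟨h, hbC⟩)
            · exact Finset.mem_union_left _ (Finset.mem_union_right _ h)
          have hc0 : ((Finset.univ : Finset (Fin χ'))).card = χ' := by simp
          have hc1 : χ' ≤ (pre s' (min (ω - 1 - k) n') ∪ C₀).card + (pre s k \ C₀).card := by
            have := Finset.card_le_card hcover2
            have h2 := Finset.card_union_le (pre s' (min (ω - 1 - k) n') ∪ C₀) (pre s k \ C₀)
            omega
          have hc2 : (pre s' (min (ω - 1 - k) n') ∪ C₀).card
                + (pre s' (min (ω - 1 - k) n') ∩ C₀).card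
              = (pre s' (min (ω - 1 - k) n')).card + C₀.card :=
            Finset.card_union_add_card_inter _ _
          have hc3 : (pre s k \ C₀).card + (pre s k ∩ C₀).card = (pre s k).card :=
            Finset.card_sdiff_add_card_inter _ _
          have hc4 : (pre s k).card = k := card_pre_chain hch le_rfl
          have hc5 : (pre s' (min (ω - 1 - k) n')).card ≤ min (ω - 1 - k) n' :=
            card_pre_le _ _
          have hc6 := hg (min (ω - 1 - k) n') (min_le_right _ _)
          have hcomm1 : pre s' (min (ω - 1 - k) n') ∩ C₀ = C₀ ∩ pre s' (min (ω - 1 - k) n') :=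
            Finset.inter_comm _ _
          have hcomm2 : pre s k ∩ C₀ = C₀ ∩ pre s k := Finset.inter_comm _ _
          rw [hcomm1] at hc2
          rw [hcomm2] at hc3
          -- pick any color outside Fb
          have hne : (Finset.univ \ Fb).Nonempty := by
            rw [← Finset.card_pos, Finset.card_sdiff_of_subset (Finset.subset_univ _)]
            omega
          obtain ⟨a, ha⟩ := hne
          rw [Finset.mem_sdiff] at ha
          refine ⟨a, ha.2, ?_⟩
          have hins : (C₀ ∩ insert a (pre s k)).card ≤ (C₀ ∩ pre s k).card + 1 := by
            have hsub : C₀ ∩ insert a (pre s k) ⊆ insert a (C₀ ∩ pre s k) := by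
              intro b hb
              rw [Finset.mem_inter, Finset.mem_insert] at hb
              rcases hb.2 with h | h
              · rw [h]; exact Finset.mem_insert_self _ _
              · exact Finset.mem_insert_of_mem (Finset.mem_inter.2 ⟨hb.1, h⟩)
            calc (C₀ ∩ insert a (pre s k)).card ≤ (insert a (C₀ ∩ pre s k)).card :=
                  Finset.card_le_card hsub
              _ ≤ (C₀ ∩ pre s k).card + 1 := Finset.card_insert_le _ _
          omega
      obtain ⟨a, haF, hacount⟩ := hmain
      refine ⟨Function.update s k a, ?_, ?_, ?_⟩
      · intro r hr q hq heq
        rcases Nat.lt_or_ge r k with hrk | hrk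
        · rcases Nat.lt_or_ge q k with hqk | hqk
          · rw [Function.update_of_ne (by omega), Function.update_of_ne (by omega)] at heq
            exact hch r hrk q hqk heq
          · have hqk' : q = k := by omega
            rw [Function.update_of_ne (by omega), hqk', Function.update_self] at heq
            exact absurd (Finset.mem_union_right _ (mem_pre.2 ⟨r, hrk, heq⟩)) haF
        · have hrk' : r = k := by omega
          rcases Nat.lt_or_ge q k with hqk | hqk
          · rw [hrk', Function.update_self, Function.update_of_ne (by omega)] at heq
            exact absurd (Finset.mem_union_right _ (mem_pre.2 ⟨q, hqk, heq.symm⟩)) haF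
          · omega
      · intro r hr q hq hsum
        rcases Nat.lt_or_ge r k with hrk | hrk
        · rw [Function.update_of_ne (by omega)]
          exact hcr r hrk q hq hsum
        · have hrk' : r = k := by omega
          rw [hrk', Function.update_self]
          intro heq
          exact haF (Finset.mem_union_left _ (mem_pre.2 ⟨q, by omega, heq.symm⟩))
      · intro x hx
        rcases Nat.lt_or_ge x (k+1) with hxk | hxk
        · rw [pre_update s k a (by omega)]
          exact hbd x (by omega)
        · have hx' : x = k + 1 := by omega
          rw [hx', pre_update_succ]
          exact hacount
  obtain ⟨s, h1, h2, h3⟩ := key n le_rfl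
  refine ⟨s, h1, h2, ?_⟩
  intro t
  have := h3 (min t n) (min_le_right _ _)
  have h4 : min t n ≤ t := min_le_left _ _
  omega

/-- one pair of levels reduces the excess by `χ' - ω` -/
lemma pairStep (ω : ℕ) (C₀ : Finset (Fin χ')) (hχ : ω < χ') (hsmall : 2 * C₀.card ≤ ω)
    (s'' : ℕ → Fin χ') (n'' κ : ℕ) (hInv : Inv ω C₀ s'' n'' κ)
    (n' n : ℕ) (hn' : n' + 1 ≤ ω) (hn : n + 1 ≤ ω) :
    ∃ s' s : ℕ → Fin χ', Chain s' n' ∧ Chain s n ∧ Cross ω s' n' s'' n'' ∧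
      Cross ω s n s' n' ∧ Inv ω C₀ s n (κ - (χ' - ω)) := by
  obtain ⟨s', h1, h2, h3⟩ := step1 ω C₀ hχ hsmall s'' n'' κ hInv n' hn'
  obtain ⟨s, g1, g2, g3⟩ := step2 ω C₀ hχ hsmall s' n' κ h3 n hn
  exact ⟨s', s, h1, g1, h2, g2, g3⟩

/-- iterate `pairStep` down `k` pairs of levels -/
lemma descend (ω : ℕ) (C₀ : Finset (Fin χ')) (hχ : ω < χ') (hsmall : 2 * C₀.card ≤ ω) :
    ∀ (k : ℕ) (j0 : ℕ) (nseq : ℕ → ℕ) (T0 : ℕ → Fin χ') (κ : ℕ),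
      Chain T0 (nseq (j0 + 2*k)) → Inv ω C₀ T0 (nseq (j0 + 2*k)) κ →
      (∀ i, j0 ≤ i → i < j0 + 2*k → nseq i + 1 ≤ ω) →
      ∃ T : ℕ → ℕ → Fin χ', T (j0 + 2*k) = T0 ∧
        (∀ i, j0 ≤ i → i ≤ j0 + 2*k → Chain (T i) (nseq i)) ∧
        (∀ i, j0 ≤ i → i < j0 + 2*k → Cross ω (T i) (nseq i) (T (i+1)) (nseq (i+1))) ∧
        Inv ω C₀ (T j0) (nseq j0) (κ - k * (χ' - ω)) := by
  intro k
  induction k with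
  | zero =>
    intro j0 nseq T0 κ hch hInv _
    refine ⟨fun _ => T0, rfl, ?_, ?_, ?_⟩
    · intro i h1 h2
      have : i = j0 := by omega
      rw [this]
      simpa using hch
    · intro i h1 h2; omega
    · simpa using hInv
  | succ k ih =>
    intro j0 nseq T0 κ hch hInv hlen
    have hidx : j0 + 2 + 2*k = j0 + 2*(k+1) := by ring
    obtain ⟨T, hT0, hTch, hTcr, hTinv⟩ := ih (j0 + 2) nseq (T0) κ
      (by rw [hidx]; exact hch) (by rw [hidx]; exact hInv)
      (fun i h1 h2 => hlen i (by omega) (by omega))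
    obtain ⟨s', s, hs'ch, hsch, hs'cr, hscr, hsinv⟩ :=
      pairStep ω C₀ hχ hsmall (T (j0+2)) (nseq (j0+2)) (κ - k * (χ' - ω))
        (hTinv) (nseq (j0+1)) (nseq j0)
        (hlen (j0+1) (by omega) (by omega)) (hlen j0 (by omega) (by omega))
    refine ⟨Function.update (Function.update T (j0+1) s') j0 s, ?_, ?_, ?_, ?_⟩
    · rw [Function.update_of_ne (by omega), Function.update_of_ne (by omega), ← hidx]
      exact hT0
    · intro i hi1 hi2
      rcases eq_or_ne i j0 with e1 | e1
      · rw [e1, Function.update_self]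
        exact hsch
      · rcases eq_or_ne i (j0+1) with e2 | e2
        · rw [Function.update_of_ne e1, e2, Function.update_self]
          exact hs'ch
        · rw [Function.update_of_ne e1, Function.update_of_ne e2]
          exact hTch i (by omega) (by omega)
    · intro i hi1 hi2
      rcases eq_or_ne i j0 with e1 | e1
      · rw [e1, Function.update_self, Function.update_of_ne (by omega : j0 + 1 ≠ j0),
          Function.update_self]
        exact hscr
      · rcases eq_or_ne i (j0+1) with e2 | e2
        · rw [e2, Function.update_of_ne (by omega : j0 + 1 ≠ j0), Function.update_self,
            Function.update_of_ne (by omega : j0 + 1 + 1 ≠ j0),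
            Function.update_of_ne (by omega : j0 + 1 + 1 ≠ j0 + 1),
            show j0 + 1 + 1 = j0 + 2 by ring]
          exact hs'cr
        · rw [Function.update_of_ne e1, Function.update_of_ne e2,
            Function.update_of_ne (by omega : i + 1 ≠ j0),
            Function.update_of_ne (show i + 1 ≠ j0 + 1 by omega)]
          exact hTcr i (by omega) (by omega)
    · rw [Function.update_self]
      have : κ - k * (χ' - ω) - (χ' - ω) = κ - (k+1) * (χ' - ω) := by
        rw [Nat.sub_sub]
        ring_nf
      rw [← this]
      exact hsinv

/-- bottom step: realize exactly the colors `C₀` at level 0 -/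
lemma step0 (ω : ℕ) (C₀ : Finset (Fin χ')) (hχ : ω < χ') (hsmall : 2 * C₀.card ≤ ω)
    (s1 : ℕ → Fin χ') (n1 : ℕ) (hInv : Inv ω C₀ s1 n1 0) :
    ∃ s0 : ℕ → Fin χ', Chain s0 C₀.card ∧ Cross ω s0 C₀.card s1 n1 ∧
      pre s0 C₀.card = C₀ := by
  have hchi0 : 0 < χ' := by omega
  have key : ∀ k, k ≤ C₀.card → ∃ s0 : ℕ → Fin χ', Chain s0 k ∧
      (∀ r < k, ∀ q < n1, r + q + 2 ≤ ω → s0 r ≠ s1 q) ∧ pre s0 k ⊆ C₀ := by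
    intro k
    induction k with
    | zero =>
      intro _
      refine ⟨fun _ => ⟨0, hchi0⟩, ?_, ?_, ?_⟩
      · intro r hr; omega
      · intro r hr; omega
      · simp [pre]
    | succ k ih =>
      intro hk1
      obtain ⟨s0, hch, hcr, hsub⟩ := ih (by omega)
      have hbd : (C₀ ∩ pre s1 (min (ω - 1 - k) n1)).card ≤ (ω - 1 - k) - (ω - C₀.card) + 0 :=
        hInv (ω - 1 - k)
      have hused : (C₀ ∩ pre s0 k).card ≤ k := le_trans
        (Finset.card_le_card (Finset.inter_subset_right)) (card_pre_le _ _)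
      have hsplit := card_split C₀ (pre s1 (min (ω - 1 - k) n1)) (pre s0 k)
      have hne : (C₀ \ (pre s1 (min (ω - 1 - k) n1) ∪ pre s0 k)).Nonempty := by
        rw [← Finset.card_pos]
        omega
      obtain ⟨a, ha⟩ := hne
      rw [Finset.mem_sdiff, Finset.mem_union] at ha
      push_neg at ha
      refine ⟨Function.update s0 k a, ?_, ?_, ?_⟩
      · intro r hr q hq heq
        rcases Nat.lt_or_ge r k with hrk | hrk
        · rcases Nat.lt_or_ge q k with hqk | hqk
          · rw [Function.update_of_ne (by omega), Function.update_of_ne (by omega)] at heq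
            exact hch r hrk q hqk heq
          · have hqk' : q = k := by omega
            rw [Function.update_of_ne (by omega), hqk', Function.update_self] at heq
            exact absurd (mem_pre.2 ⟨r, hrk, heq⟩) ha.2.2
        · have hrk' : r = k := by omega
          rcases Nat.lt_or_ge q k with hqk | hqk
          · rw [hrk', Function.update_self, Function.update_of_ne (by omega)] at heq
            exact absurd (mem_pre.2 ⟨q, hqk, heq.symm⟩) ha.2.2
          · omega
      · intro r hr q hq hsum
        rcases Nat.lt_or_ge r k with hrk | hrk
        · rw [Function.update_of_ne (by omega)]
          exact hcr r hrk q hq hsum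
        · have hrk' : r = k := by omega
          rw [hrk', Function.update_self]
          intro heq
          exact ha.2.1 (mem_pre.2 ⟨q, by omega, heq.symm⟩)
      · rw [pre_update_succ]
        exact Finset.insert_subset ha.1 hsub
  obtain ⟨s0, h1, h2, h3⟩ := key C₀.card le_rfl
  refine ⟨s0, h1, h2, ?_⟩
  apply Finset.eq_of_subset_of_card_le h3
  rw [card_pre_chain h1 le_rfl]

end PBX

/-- `P = Z₀Z₁⋯Z_m` is a blow-up of a path: the vertex set of `G` is partitioned into the
nonempty ordered cliques `Z 0, …, Z m`, edges occur only between consecutive cliques,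
each consecutive bipartite graph `G[Z j, Z (j+1)]` obeys the orderings (recorded by
`pos`: each vertex is adjacent to an initial segment of the neighbouring clique), and
every vertex of such a bipartite graph has positive degree in it. -/
def IsPathBlowup {V : Type} (G : SimpleGraph V) (m : ℕ) (Z : ℕ → Finset V)
    (pos : V → ℕ) : Prop :=
  (∀ v : V, ∃! i, i ≤ m ∧ v ∈ Z i) ∧
  (∀ i, i ≤ m → (Z i).Nonempty) ∧
  (∀ i, G.IsClique (Z i)) ∧
  (∀ i j, i ≤ m → j ≤ m → ∀ u ∈ Z i, ∀ v ∈ Z j, G.Adj u v → i = j ∨ j = i + 1 ∨ i = j + 1) ∧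
  (∀ i, i ≤ m → ∀ u ∈ Z i, ∀ u' ∈ Z i, u ≠ u' → pos u ≠ pos u') ∧
  (∀ i, i + 1 ≤ m → ∀ u ∈ Z i, ∀ u' ∈ Z i, ∀ v ∈ Z (i + 1),
      pos u' ≤ pos u → G.Adj u v → G.Adj u' v) ∧
  (∀ i, i + 1 ≤ m → ∀ v ∈ Z (i + 1), ∀ v' ∈ Z (i + 1), ∀ u ∈ Z i,
      pos v' ≤ pos v → G.Adj u v → G.Adj u v') ∧
  (∀ i, i + 1 ≤ m → ∀ v ∈ Z (i + 1), ∃ u ∈ Z i, G.Adj u v) ∧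
  (∀ i, i + 1 ≤ m → ∀ u ∈ Z i, ∃ v ∈ Z (i + 1), G.Adj u v)

/-- Precoloring extension along an odd blow-up of a path (Lemma 3.8(1)): if `m ≥ 3` is
odd, `|Z₀| ≤ ω/2`, the end clique `Z m` carries a specific proper precoloring `c` with
color set `C_m`, the other end `Z₀` is only assigned a color set `C₀`, and
`|C₀ ∩ C_m| ≤ (m-1)(χ'-ω)/2`, then the precoloring extends to a proper `χ'`-coloring of
the whole blow-up (keeping `c` on `Z m` and using exactly the colors `C₀` on `Z₀`). -/
theorem pathBlowup_extend_odd {V : Type} [Fintype V] [DecidableEq V]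
    (G : SimpleGraph V) (m : ℕ) (Z : ℕ → Finset V) (pos : V → ℕ)
    (hP : IsPathBlowup G m Z pos) (hm3 : 3 ≤ m) (hmodd : Odd m)
    (χ' : ℕ) (hχ : G.cliqueNum < χ')
    (hZ0 : 2 * (Z 0).card ≤ G.cliqueNum)
    (c : V → Fin χ')
    (hc : ∀ u ∈ Z m, ∀ v ∈ Z m, u ≠ v → c u ≠ c v)
    (C₀ : Finset (Fin χ')) (hC₀ : C₀.card = (Z 0).card)
    (hint : 2 * (C₀ ∩ (Z m).image c).card ≤ (m - 1) * (χ' - G.cliqueNum)) :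
    ∃ f : G.Coloring (Fin χ'), (∀ v ∈ Z m, f v = c v) ∧ (Z 0).image f = C₀ := by
  classical
  obtain ⟨h1, h2, h3, h4, h5, h6, h7, h8, h9⟩ := hP
  set ω := G.cliqueNum with hω
  set nz : ℕ → ℕ := fun j => (Z j).card with hnz
  -- the unique level of a vertex
  choose J hJ using h1
  have hJmem : ∀ v : V, J v ≤ m ∧ v ∈ Z (J v) := fun v => (hJ v).1
  have hJuniq : ∀ v : V, ∀ i, i ≤ m → v ∈ Z i → i = J v := fun v i hi hv => (hJ v).2 i ⟨hi, hv⟩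
  -- 0-based rank within a level
  set idxj : ℕ → V → ℕ := fun j v => ((Z j).filter (fun u => pos u < pos v)).card with hidxj
  -- rank is strictly monotone in pos
  have hmono : ∀ j ≤ m, ∀ u ∈ Z j, ∀ v ∈ Z j, pos u < pos v → idxj j u < idxj j v := by
    intro j hj u hu v hv hp
    apply Finset.card_lt_card
    constructor
    · intro w hw
      rw [Finset.mem_filter] at hw ⊢
      exact ⟨hw.1, lt_trans hw.2 hp⟩
    · intro hsub
      have := hsub (Finset.mem_filter.2 ⟨hu, hp⟩)
      rw [Finset.mem_filter] at this
      omega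
  -- injectivity of rank
  have hinj : ∀ j ≤ m, ∀ u ∈ Z j, ∀ v ∈ Z j, idxj j u = idxj j v → u = v := by
    intro j hj u hu v hv he
    by_contra hne
    have hpne := h5 j hj u hu v hv hne
    rcases lt_trichotomy (pos u) (pos v) with h | h | h
    · have := hmono j hj u hu v hv h; omega
    · exact hpne h
    · have := hmono j hj v hv u hu h; omega
  -- rank bound
  have hbound : ∀ j ≤ m, ∀ v ∈ Z j, idxj j v < nz j := by
    intro j hj v hv
    apply Finset.card_lt_card
    constructor
    · exact Finset.filter_subset _ _
    · intro hsub
      have := hsub hv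
      rw [Finset.mem_filter] at this
      omega
  -- rank image is an initial segment
  have himage : ∀ j ≤ m, (Z j).image (idxj j) = Finset.range (nz j) := by
    intro j hj
    apply Finset.eq_of_subset_of_card_le
    · intro r hr
      rw [Finset.mem_image] at hr
      obtain ⟨v, hv, rfl⟩ := hr
      rw [Finset.mem_range]
      exact hbound j hj v hv
    · rw [Finset.card_range, Finset.card_image_of_injOn]
      intro u hu v hv
      exact hinj j hj u hu v hv
  have hsurj : ∀ j ≤ m, ∀ r < nz j, ∃ v ∈ Z j, idxj j v = r := by
    intro j hj r hr
    have : r ∈ (Z j).image (idxj j) := by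
      rw [himage j hj, Finset.mem_range]; exact hr
    rw [Finset.mem_image] at this
    obtain ⟨v, hv, he⟩ := this
    exact ⟨v, hv, he⟩
  -- rank-sum bound from the clique number
  have hsum : ∀ j, j + 1 ≤ m → ∀ u ∈ Z j, ∀ v ∈ Z (j+1), G.Adj u v →
      idxj j u + idxj (j+1) v + 2 ≤ ω := by
    intro j hjm u hu v hv hadj
    set A := (Z j).filter (fun w => pos w ≤ pos u) with hA
    set B := (Z (j+1)).filter (fun w => pos w ≤ pos v) with hB
    have hAmem : ∀ w ∈ A, w ∈ Z j ∧ pos w ≤ pos u := by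
      intro w hw; rw [hA, Finset.mem_filter] at hw; exact hw
    have hBmem : ∀ w ∈ B, w ∈ Z (j+1) ∧ pos w ≤ pos v := by
      intro w hw; rw [hB, Finset.mem_filter] at hw; exact hw
    have hclique : G.IsClique ((A ∪ B : Finset V) : Set V) := by
      intro a ha b hb hne
      rw [Finset.coe_union, Set.mem_union] at ha hb
      rcases ha with ha | ha
      · rcases hb with hb | hb
        · exact h3 j (hAmem a ha).1 (hAmem b hb).1 hne
        · have h6a : G.Adj a v := h6 j hjm u hu a (hAmem a ha).1 v hv (hAmem a ha).2 hadj
          exact h7 j hjm v hv b (hBmem b hb).1 a (hAmem a ha).1 (hBmem b hb).2 h6a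
      · rcases hb with hb | hb
        · have h6b : G.Adj b v := h6 j hjm u hu b (hAmem b hb).1 v hv (hAmem b hb).2 hadj
          exact (h7 j hjm v hv a (hBmem a ha).1 b (hAmem b hb).1 (hBmem a ha).2 h6b).symm
        · exact h3 (j+1) (hBmem a ha).1 (hBmem b hb).1 hne
    have hdisj : Disjoint A B := by
      rw [Finset.disjoint_left]
      intro a haA haB
      have e1 := hJuniq a j (by omega) (hAmem a haA).1
      have e2 := hJuniq a (j+1) hjm (hBmem a haB).1
      omega
    have hcardA : A.card = idxj j u + 1 := by
      have : A = insert u ((Z j).filter (fun w => pos w < pos u)) := by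
        ext w
        rw [hA, Finset.mem_filter, Finset.mem_insert, Finset.mem_filter]
        constructor
        · rintro ⟨hwZ, hwp⟩
          rcases eq_or_ne w u with rfl | hne
          · exact Or.inl rfl
          · exact Or.inr ⟨hwZ, lt_of_le_of_ne hwp (h5 j (by omega) w hwZ u hu hne)⟩
        · rintro (rfl | ⟨hwZ, hwp⟩)
          · exact ⟨hu, le_refl _⟩
          · exact ⟨hwZ, le_of_lt hwp⟩
      rw [this, Finset.card_insert_of_notMem (by simp)]
    have hcardB : B.card = idxj (j+1) v + 1 := by
      have : B = insert v ((Z (j+1)).filter (fun w => pos w < pos v)) := by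
        ext w
        rw [hB, Finset.mem_filter, Finset.mem_insert, Finset.mem_filter]
        constructor
        · rintro ⟨hwZ, hwp⟩
          rcases eq_or_ne w v with rfl | hne
          · exact Or.inl rfl
          · exact Or.inr ⟨hwZ, lt_of_le_of_ne hwp (h5 (j+1) hjm w hwZ v hv hne)⟩
        · rintro (rfl | ⟨hwZ, hwp⟩)
          · exact ⟨hv, le_refl _⟩
          · exact ⟨hwZ, le_of_lt hwp⟩
      rw [this, Finset.card_insert_of_notMem (by simp)]
    have hccard : (A ∪ B).card = idxj j u + 1 + (idxj (j+1) v + 1) := by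
      rw [Finset.card_union_of_disjoint hdisj, hcardA, hcardB]
    have hle : (A ∪ B).card ≤ G.cliqueNum :=
      SimpleGraph.IsClique.card_le_cliqueNum (tc := hclique)
    omega
  -- middle levels are not too large
  have hlen : ∀ j, 1 ≤ j → j ≤ m → nz j + 1 ≤ ω := by
    intro j hj1 hjm
    obtain ⟨i, rfl⟩ : ∃ i, j = i + 1 := ⟨j - 1, by omega⟩
    have hnzpos : 0 < nz (i+1) := Finset.card_pos.2 (h2 (i+1) hjm)
    obtain ⟨v, hv, hvidx⟩ := hsurj (i+1) hjm (nz (i+1) - 1) (by omega)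
    obtain ⟨u, hu, hadj⟩ := h8 i hjm v hv
    have := hsum i hjm u hu v hv hadj
    omega
  have hω2 : 2 * C₀.card ≤ ω := by rw [hC₀]; exact hZ0
  -- the top chain from `c`
  have hvm : ∀ r : ℕ, ∃ w : V, r < nz m → w ∈ Z m ∧ idxj m w = r := by
    intro r
    by_cases h : r < nz m
    · obtain ⟨v, hv, he⟩ := hsurj m le_rfl r h
      exact ⟨v, fun _ => ⟨hv, he⟩⟩
    · exact ⟨(h2 m le_rfl).choose, fun hr => absurd hr h⟩
  choose w hw using hvm
  set sm : ℕ → Fin χ' := fun r => c (w r) with hsm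
  have hsmchain : PBX.Chain sm (nz m) := by
    intro r hr q hq he
    have hwr := hw r hr
    have hwq := hw q hq
    by_contra hne
    have : w r ≠ w q := by
      intro hww
      rw [← hwr.2, ← hwq.2, hww] at hne
      exact hne rfl
    exact hc (w r) hwr.1 (w q) hwq.1 this he
  set I := (C₀ ∩ (Z m).image c).card with hI
  have hsminv : PBX.Inv ω C₀ sm (nz m) I := by
    intro t
    have hsub : C₀ ∩ PBX.pre sm (min t (nz m)) ⊆ C₀ ∩ (Z m).image c := by
      intro a ha
      rw [Finset.mem_inter] at ha ⊢
      refine ⟨ha.1, ?_⟩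
      have := ha.2
      rw [PBX.pre, Finset.mem_image] at this
      obtain ⟨r, hr, he⟩ := this
      rw [Finset.mem_range] at hr
      have hwr := hw r (by omega)
      rw [Finset.mem_image]
      exact ⟨w r, hwr.1, he⟩
    have := Finset.card_le_card hsub
    omega
  -- descend the path
  obtain ⟨k, hk⟩ := hmodd
  have hm' : 1 + 2 * k = m := by omega
  obtain ⟨T, hTtop, hTch, hTcr, hTinv⟩ :=
    PBX.descend ω C₀ hχ hω2 k 1 nz sm I (by rw [hm']; exact hsmchain)
      (by rw [hm']; exact hsminv) (fun i hi1 hi2 => hlen i hi1 (by omega))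
  have hinv0 : PBX.Inv ω C₀ (T 1) (nz 1) 0 := by
    have hz : I - k * (χ' - ω) = 0 := by
      have : (m - 1) * (χ' - ω) = 2 * (k * (χ' - ω)) := by
        rw [show m - 1 = 2 * k by omega]
        ring
      omega
    rw [← hz]
    exact hTinv
  obtain ⟨s0, hs0ch, hs0cr, hs0pre⟩ := PBX.step0 ω C₀ hχ hω2 (T 1) (nz 1) hinv0
  -- full family of chains
  set Tf : ℕ → ℕ → Fin χ' := fun j => if j = 0 then s0 else T j with hTf
  have hTf0 : Tf 0 = s0 := by simp [hTf]
  have hTfpos : ∀ j : ℕ, j ≠ 0 → Tf j = T j := by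
    intro j hj
    simp [hTf, hj]
  have hTfch : ∀ j ≤ m, PBX.Chain (Tf j) (nz j) := by
    intro j hj
    rcases eq_or_ne j 0 with rfl | hne
    · rw [hTf0]
      have : nz 0 = C₀.card := by rw [hC₀]
      rw [this]
      exact hs0ch
    · rw [hTfpos j hne]
      exact hTch j (by omega) (by omega)
  have hTfcr : ∀ j, j + 1 ≤ m → PBX.Cross ω (Tf j) (nz j) (Tf (j+1)) (nz (j+1)) := by
    intro j hj
    rcases eq_or_ne j 0 with rfl | hne
    · rw [hTf0, hTfpos 1 (by omega)]
      have : nz 0 = C₀.card := by rw [hC₀]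
      rw [show (0:ℕ) + 1 = 1 by ring, this]
      exact hs0cr
    · rw [hTfpos j hne, hTfpos (j+1) (by omega)]
      exact hTcr j (by omega) (by omega)
  -- the coloring
  set f : V → Fin χ' := fun v => Tf (J v) (idxj (J v) v) with hf
  have hvalid : ∀ u v : V, G.Adj u v → f u ≠ f v := by
    intro u v hadj heq
    simp only [hf] at heq
    have hJu := hJmem u
    have hJv := hJmem v
    have hbu := hbound (J u) hJu.1 u hJu.2
    have hbv := hbound (J v) hJv.1 v hJv.2
    rcases h4 (J u) (J v) hJu.1 hJv.1 u hJu.2 v hJv.2 hadj with he | he | he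
    · rw [← he] at heq hbv
      have hiv : v ∈ Z (J u) := by rw [he]; exact hJv.2
      exact G.ne_of_adj hadj (hinj (J u) hJu.1 u hJu.2 v hiv
        (hTfch (J u) hJu.1 _ hbu _ hbv heq))
    · rw [he] at heq hbv
      have hzv : v ∈ Z (J u + 1) := by rw [← he]; exact hJv.2
      have hjum : J u + 1 ≤ m := by omega
      have hsum' := hsum (J u) hjum u hJu.2 v hzv hadj
      exact hTfcr (J u) hjum (idxj (J u) u) hbu (idxj (J u + 1) v) hbv hsum' heq
    · rw [he] at heq hbu
      have hzu : u ∈ Z (J v + 1) := by rw [← he]; exact hJu.2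
      have hjvm : J v + 1 ≤ m := by omega
      have hsum' := hsum (J v) hjvm v hJv.2 u hzu hadj.symm
      exact hTfcr (J v) hjvm (idxj (J v) v) hbv (idxj (J v + 1) u) hbu hsum' heq.symm
  refine ⟨SimpleGraph.Coloring.mk f (fun {u v} h => hvalid u v h), ?_, ?_⟩
  · -- agrees with c on Z m
    intro v hv
    have hJvm : J v = m := (hJuniq v m le_rfl hv).symm
    have hb := hbound m le_rfl v hv
    have hwv := hw (idxj m v) hb
    have hveq : w (idxj m v) = v := hinj m le_rfl _ hwv.1 v hv hwv.2
    show f v = c v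
    simp only [hf]
    rw [hJvm, hTfpos m (by omega)]
    have hTm : T m = sm := by rw [← hm']; exact hTtop
    rw [hTm, hsm]
    simp only
    rw [hveq]
  · -- image on Z 0
    show (Z 0).image f = C₀
    have hJ0 : ∀ v ∈ Z 0, J v = 0 := fun v hv => (hJuniq v 0 (by omega) hv).symm
    have h1' : (Z 0).image f = (Z 0).image (fun v => s0 (idxj 0 v)) := by
      apply Finset.image_congr
      intro v hv
      rw [mem_coe] at hv
      simp only [hf]
      rw [hJ0 v hv, hTf0]
    rw [h1']
    have himg2 : (Z 0).image (fun v => s0 (idxj 0 v)) = ((Z 0).image (idxj 0)).image s0 := by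
      rw [Finset.image_image]
      rfl
    rw [himg2, himage 0 (by omega), ← hs0pre, PBX.pre, hC₀]
end

section
/- Let ℓ = 4s+3 ≥ 7 and ω ≥ 1 with c = ⌈ω/(ℓ−1)⌉, and let m₁ ≥ m₂ ≥ m₃ ≥ sc+1 be integers with m₁+m₂+m₃ ≤ ω and each mⱼ ≥ ⌈3sc/2⌉ (case k = 3, i′ = 3). Then Σⱼ₌₁³ (mⱼ − ⌈3sc/2⌉) + 3⌈sc/2⌉ + ω − m₁ ≤ ⌈ℓω/(ℓ−1)⌉. -/
/-- Inequality (1) of the paper, case `k = 3`, `i′ = 3`: with `ℓ = 4s+3 ≥ 7`,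
`c = ⌈ω/(ℓ-1)⌉`, `m₁ ≥ m₂ ≥ m₃ ≥ sc+1`, `m₁+m₂+m₃ ≤ ω` and each `mⱼ ≥ ⌈3sc/2⌉`,
one has `Σⱼ (mⱼ − ⌈3sc/2⌉) + 3⌈sc/2⌉ + ω − m₁ ≤ ⌈ℓω/(ℓ−1)⌉`. -/
theorem ineq_one_k3_i3 (ℓ s ω m₁ m₂ m₃ : ℕ)
    (hℓ7 : 7 ≤ ℓ) (hs : ℓ = 4 * s + 3) (hω : 1 ≤ ω)
    (h12 : m₂ ≤ m₁) (h23 : m₃ ≤ m₂)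
    (hlb : s * (ω ⌈/⌉ (ℓ - 1)) + 1 ≤ m₃)
    (hsum : m₁ + m₂ + m₃ ≤ ω)
    (hbig : ∀ m ∈ [m₁, m₂, m₃], (3 * s * (ω ⌈/⌉ (ℓ - 1))) ⌈/⌉ 2 ≤ m) :
    (m₁ - (3 * s * (ω ⌈/⌉ (ℓ - 1))) ⌈/⌉ 2) + (m₂ - (3 * s * (ω ⌈/⌉ (ℓ - 1))) ⌈/⌉ 2) +
      (m₃ - (3 * s * (ω ⌈/⌉ (ℓ - 1))) ⌈/⌉ 2) +
      3 * ((s * (ω ⌈/⌉ (ℓ - 1))) ⌈/⌉ 2) + (ω - m₁) ≤ (ℓ * ω) ⌈/⌉ (ℓ - 1) := by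
  set c := ω ⌈/⌉ (ℓ - 1) with hcdef
  have hL : 0 < ℓ - 1 := by omega
  have hc : ω ≤ (ℓ - 1) * c := le_smul_ceilDiv hL
  -- RHS = ω + c
  have hR : (ℓ * ω) ⌈/⌉ (ℓ - 1) = ω + c := by
    rw [hcdef, Nat.ceilDiv_eq_add_pred_div, Nat.ceilDiv_eq_add_pred_div]
    have h0 : ℓ * ω = ω + (ℓ - 1) * ω := by
      cases ℓ with
      | zero => omega
      | succ n => simp [Nat.succ_mul]; omega
    have h1 : ℓ * ω + (ℓ - 1) - 1 = (ω + (ℓ - 1) - 1) + (ℓ - 1) * ω := by omega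
    rw [h1, Nat.add_mul_div_left _ _ hL, Nat.add_comm]
  have hassoc : 3 * s * c = 3 * (s * c) := by ring
  have hA : (3 * s * c) ⌈/⌉ 2 = s * c + (s * c) ⌈/⌉ 2 := by
    rw [hassoc, Nat.ceilDiv_eq_add_pred_div, Nat.ceilDiv_eq_add_pred_div]
    omega
  have h1 := hbig m₁ (by simp)
  have h2 := hbig m₂ (by simp)
  have h3 := hbig m₃ (by simp)
  have hsc : c ≤ s * c := Nat.le_mul_of_pos_left c (by omega)
  have hω' : ω ≤ 4 * (s * c) + 2 * c := by
    rw [hs] at hc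
    have e : (4 * s + 3 - 1) * c = 4 * (s * c) + 2 * c := by
      have e2 : 4 * s + 3 - 1 = 4 * s + 2 := by omega
      rw [e2]; ring
    omega
  rw [hR, hA] at *
  clear hc
  set b := (s * c) ⌈/⌉ 2
  set t := s * c
  omega
end
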